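/- arXiv:math/0507525 — 5 statements merged into one kernel-verified Lean document; each statement's English description precedes it below -/
import Mathlib

section
/- Let P : ℂ² → ℂ² be a polynomial map with J(P) identically equal to 1. Then for each point (a,b) ∈ ℂ², the fiber P⁻¹(a,b) = {(x,y) ∈ ℂ² : P(x,y) = (a,b)} is a finite set. -/
/-!
If `J(f, g) = 1`, then `F = f - a` and `G = g - b` still have Jacobian `1`, so they are
relatively prime: a common factor of `F` and `G` divides `J(F, G)` by the Leibniz rule.
Viewed as polynomials in `x` over the UFD `ℂ[y]`, Gauss's lemma keeps `F` and `G` coprime over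
the field `ℂ(y)`; clearing the denominators of a Bézout identity there yields a nonzero
`c(y) = u F + v G`, which vanishes at the `y`-coordinate of every common zero. Hence only
finitely many `y` occur, and by symmetry only finitely many `x`.
-/

open MvPolynomial

namespace Polynomial

open nonZeroDivisors

section FractionRing

variable {R K : Type*} [CommRing R] [IsDomain R] [Field K] [Algebra R K] [IsFractionRing R K]

theorem exists_isPrimitive_associated_map [IsGCDMonoid R] {d : K[X]} (hd : d ≠ 0) :
    ∃ r : R[X], r.IsPrimitive ∧ Associated (r.map (algebraMap R K)) d := by
  let : NormalizedGCDMonoid R := Nonempty.some inferInstance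
  set N := IsLocalization.integerNormalization R⁰ d
  obtain ⟨s, hs, hN⟩ := IsLocalization.integerNormalization_spec R⁰ d
  have hunit {c : R} (hc : c ≠ 0) : IsUnit (C (algebraMap R K c)) :=
    isUnit_C.mpr ((map_ne_zero_iff _ (IsFractionRing.injective R K)).mpr hc).isUnit
  have hcontent : N.content ≠ 0 :=
    content_eq_zero_iff.not.mpr (IsFractionRing.integerNormalization_eq_zero_iff.not.mpr hd)
  have hmap : C (algebraMap R K N.content) * N.primPart.map (algebraMap R K) =
      C (algebraMap R K s) * d := by
    rw [← map_C, ← Polynomial.map_mul, ← N.eq_C_content_mul_primPart, hN, Algebra.smul_def,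
      algebraMap_apply]
  refine ⟨N.primPart, N.isPrimitive_primPart, ?_⟩
  exact (associated_unit_mul_right _ _ (hunit hcontent)).trans
    (hmap ▸ associated_unit_mul_left _ _ (hunit (nonZeroDivisors.ne_zero hs)))

theorem isCoprime_map_of_isRelPrime [IsGCDMonoid R] {p q : R[X]} (h : IsRelPrime p q) :
    IsCoprime (p.map (algebraMap R K)) (q.map (algebraMap R K)) := by
  refine IsRelPrime.isCoprime fun d hdp hdq => ?_
  have hd : d ≠ 0 := by
    rintro rfl
    have hinj := map_injective (algebraMap R K) (IsFractionRing.injective R K)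
    rw [zero_dvd_iff, ← Polynomial.map_zero (algebraMap R K), hinj.eq_iff] at hdp hdq
    exact not_isRelPrime_zero_zero (hdp ▸ hdq ▸ h)
  obtain ⟨r, hr, hrd⟩ := exists_isPrimitive_associated_map (R := R) hd
  have hunit : IsUnit r := h (hr.dvd_of_fraction_map_dvd_fraction_map (hrd.dvd.trans hdp))
    (hr.dvd_of_fraction_map_dvd_fraction_map (hrd.dvd.trans hdq))
  exact hrd.isUnit_iff.mp (hunit.map (mapRingHom _))

attribute [local instance] Polynomial.algebra in
theorem exists_mul_add_mul_eq_C_of_isCoprime_map {p q : R[X]}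
    (h : IsCoprime (p.map (algebraMap R K)) (q.map (algebraMap R K))) :
    ∃ c ≠ 0, ∃ u v : R[X], u * p + v * q = C c := by
  -- `K[X]` is the localization of `R[X]` at the nonzero constants.
  have := isLocalization R⁰ K
  have hspan : (Ideal.span {p, q}).map (algebraMap R[X] K[X]) = ⊤ := by
    obtain ⟨u, v, huv⟩ := h
    rw [Ideal.map_span, Set.image_pair, Ideal.eq_top_iff_one, Ideal.mem_span_pair]
    exact ⟨u, v, huv⟩
  obtain ⟨_, ⟨c, hc, rfl⟩, hmem⟩ := Set.not_disjoint_iff.mp fun hdisj =>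
    (IsLocalization.map_algebraMap_ne_top_iff_disjoint (R⁰.map C) K[X] _).mpr hdisj hspan
  exact ⟨c, nonZeroDivisors.ne_zero hc, Ideal.mem_span_pair.mp hmem⟩

end FractionRing

theorem exists_mul_add_mul_eq_C_of_isRelPrime {R : Type*} [CommRing R] [IsDomain R]
    [IsGCDMonoid R] {p q : R[X]} (h : IsRelPrime p q) :
    ∃ c ≠ 0, ∃ u v : R[X], u * p + v * q = C c :=
  exists_mul_add_mul_eq_C_of_isCoprime_map (isCoprime_map_of_isRelPrime (K := FractionRing R) h)

end Polynomial

namespace MvPolynomial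

theorem isRelPrime_of_pderiv_mul_pderiv_sub_eq_one {R σ : Type*} [CommRing R] (i j : σ)
    {F G : MvPolynomial σ R} (hJ : pderiv i F * pderiv j G - pderiv j F * pderiv i G = 1) :
    IsRelPrime F G := by
  rintro d ⟨u, rfl⟩ ⟨v, rfl⟩
  -- every term of `J(d u, d v)`, expanded by the Leibniz rule, has a factor `d`
  refine isUnit_of_dvd_one ⟨pderiv i d * u * pderiv j v + pderiv i u * pderiv j d * v
      + d * pderiv i u * pderiv j v - pderiv j d * u * pderiv i v
      - pderiv j u * pderiv i d * v - d * pderiv j u * pderiv i v, ?_⟩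
  rw [← hJ]
  simp only [Derivation.leibniz, smul_eq_mul]
  ring

section

variable {R : Type*} [CommRing R] [IsDomain R]

theorem finite_setOf_eval_eq_zero_of_ne_zero {d : MvPolynomial (Fin 1) R} (hd : d ≠ 0) :
    {y : R | eval ![y] d = 0}.Finite := by
  have heval : Function.Injective (eval (![] : Fin 0 → R)) :=
    aeval_injective_iff_of_isEmpty.mpr Function.injective_id
  have hinj : Function.Injective fun d => (finSuccEquiv R 0 d).map (eval ![]) :=
    (Polynomial.map_injective _ heval).comp (finSuccEquiv R 0).injective
  refine (Polynomial.finite_setOfPred_isRoot (hinj.ne_iff' (by simp) |>.mpr hd)).subset ?_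
  exact fun y hy => (eval_eq_eval_mv_eval' ![] y d).symm.trans hy

theorem finite_setOf_exists_eval_eq_zero_of_isRelPrime [UniqueFactorizationMonoid R]
    {F G : MvPolynomial (Fin 2) R} (h : IsRelPrime F G) :
    {y : R | ∃ x, eval ![x, y] F = 0 ∧ eval ![x, y] G = 0}.Finite := by
  obtain ⟨c, hc, u, v, huv⟩ := Polynomial.exists_mul_add_mul_eq_C_of_isRelPrime
    (IsRelPrime.of_map (finSuccEquiv R 1).symm (a := finSuccEquiv R 1 F) (b := finSuccEquiv R 1 G)
      (by simpa using h))
  refine (finite_setOf_eval_eq_zero_of_ne_zero hc).subset ?_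
  rintro y ⟨x, hF, hG⟩
  replace hF := (eval_eq_eval_mv_eval' ![y] x F).symm.trans hF
  replace hG := (eval_eq_eval_mv_eval' ![y] x G).symm.trans hG
  have := congrArg (fun r => Polynomial.eval x (r.map (eval ![y]))) huv
  simp only [Polynomial.map_add, Polynomial.map_mul, Polynomial.eval_add, Polynomial.eval_mul,
    Polynomial.map_C, Polynomial.eval_C, hF, hG, mul_zero, add_zero] at this
  exact this.symm

theorem finite_setOf_eval_eq_zero_and_eval_eq_zero_of_isRelPrime [UniqueFactorizationMonoid R]
    {F G : MvPolynomial (Fin 2) R} (h : IsRelPrime F G) :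
    {p : R × R | eval ![p.1, p.2] F = 0 ∧ eval ![p.1, p.2] G = 0}.Finite := by
  let e := renameEquiv R (Equiv.swap (0 : Fin 2) 1)
  have eval_swap (x y : R) (H : MvPolynomial (Fin 2) R) :
      eval ![x, y] (e H) = eval ![y, x] H := by
    rw [renameEquiv_apply, eval_rename]
    congr 2
    funext i
    fin_cases i <;> rfl
  have hfst := finite_setOf_exists_eval_eq_zero_of_isRelPrime
    (IsRelPrime.of_map e.symm (a := e F) (b := e G) (by simpa using h))
  refine (hfst.prod (finite_setOf_exists_eval_eq_zero_of_isRelPrime h)).subset ?_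
  rintro ⟨x, y⟩ ⟨hF, hG⟩
  exact ⟨⟨y, by rwa [eval_swap], by rwa [eval_swap]⟩, ⟨x, hF, hG⟩⟩

end

end MvPolynomial

/-- Lemma 4: if `P = (f, g) : ℂ² → ℂ²` has Jacobian determinant identically `1`, then every
fiber `P⁻¹(a, b)` is finite. -/
theorem fiber_finite_of_jacobian_eq_one
    (f g : MvPolynomial (Fin 2) ℂ)
    (hJ : pderiv 0 f * pderiv 1 g - pderiv 1 f * pderiv 0 g = 1)
    (a b : ℂ) :
    {p : ℂ × ℂ | eval ![p.1, p.2] f = a ∧ eval ![p.1, p.2] g = b}.Finite := by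
  have hJ' : pderiv 0 (f - C a) * pderiv 1 (g - C b) - pderiv 1 (f - C a) * pderiv 0 (g - C b)
      = 1 := by
    simpa only [map_sub, pderiv_C, sub_zero] using hJ
  refine (finite_setOf_eval_eq_zero_and_eval_eq_zero_of_isRelPrime
    (isRelPrime_of_pderiv_mul_pderiv_sub_eq_one 0 1 hJ')).subset ?_
  rintro ⟨x, y⟩ ⟨hf, hg⟩
  simp [hf, hg]
end

section
/- Let f, g ∈ ℂ[x,y] be polynomials whose Jacobian determinant f_x g_y − f_y g_x is equal to a nonzero constant. Then f and g have no common non-constant factor. -/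
open MvPolynomial

/-- A unit of `ℂ[x,y]` has total degree zero. -/
lemma totalDegree_eq_zero_of_isUnit {h : MvPolynomial (Fin 2) ℂ} (hu : IsUnit h) :
    h.totalDegree = 0 := by
  have hdeg : ∀ i : Fin 2, h.degreeOf i = 0 := by
    intro i
    have key : ∀ p : MvPolynomial (Fin 2) ℂ, IsUnit p → p.degreeOf 0 = 0 := by
      intro p hp
      have : IsUnit (MvPolynomial.finSuccEquiv ℂ 1 p) := hp.map _
      have h0 := Polynomial.natDegree_eq_zero_of_isUnit this
      rwa [natDegree_finSuccEquiv] at h0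
    fin_cases i
    · exact key h hu
    · have hswap : Function.Injective (Equiv.swap (0 : Fin 2) 1) :=
        (Equiv.swap 0 1).injective
      have := key (rename (Equiv.swap (0 : Fin 2) 1) h)
        (hu.map (rename (Equiv.swap (0 : Fin 2) 1)))
      have hr := degreeOf_rename_of_injective (p := h) hswap 1
      simp only [Equiv.swap_apply_right] at hr
      show degreeOf 1 h = 0
      rw [← hr]
      exact this
  rw [totalDegree_eq_zero_iff]
  intro m hm x
  have := monomial_le_degreeOf x hm
  rw [hdeg x] at this
  omega

/-- If `f, g ∈ ℂ[x, y]` have Jacobian determinant equal to a nonzero constant, then `f` and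
`g` have no common non-constant factor. -/
theorem no_common_factor_of_jacobian_nonzero_const
    (f g : MvPolynomial (Fin 2) ℂ) (c : ℂ) (hc : c ≠ 0)
    (hJ : pderiv 0 f * pderiv 1 g - pderiv 1 f * pderiv 0 g = MvPolynomial.C c) :
    ∀ h : MvPolynomial (Fin 2) ℂ, h ∣ f → h ∣ g → h.totalDegree = 0 := by
  rintro h ⟨a, rfl⟩ ⟨b, rfl⟩
  have hdvd : h ∣ MvPolynomial.C c := by
    rw [← hJ]
    simp only [pderiv_mul]
    exact ⟨pderiv 0 h * a * pderiv 1 b + pderiv 0 a * (pderiv 1 h * b)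
        + pderiv 0 a * (h * pderiv 1 b)
        - (pderiv 1 h * a * pderiv 0 b + pderiv 1 a * (pderiv 0 h * b)
        + pderiv 1 a * (h * pderiv 0 b)), by ring⟩
  have hCc : IsUnit (MvPolynomial.C c : MvPolynomial (Fin 2) ℂ) :=
    isUnit_iff_exists_inv.mpr ⟨MvPolynomial.C c⁻¹, by
      rw [← MvPolynomial.C_mul, mul_inv_cancel₀ hc, MvPolynomial.C_1]⟩
  exact totalDegree_eq_zero_of_isUnit (isUnit_of_dvd_unit hdvd hCc)
end

section
/- Let a(x,y), b(x,y) ∈ ℤ[x,y] be coprime polynomials with b non-constant, so that a(x,y)/b(x,y) is a rational function with integer coefficients that is not a polynomial. Then there is a constant C such that for all large enough N, the number of integer pairs (x₀,y₀) ∈ [-N,N]² with b(x₀,y₀) ≠ 0 for which a(x₀,y₀)/b(x₀,y₀) is an integer is at most C·N^{3/2}. -/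
/-!
View `a` and `b` as polynomials `A`, `B` in `y` over `ℤ[x]`. Having no common factor in `ℤ[x][y]`,
they are coprime over `Frac ℤ[x]` by Gauss's lemma, so their resultant `r(x)` is nonzero and
`A U + B V = r` for some `U, V`. Hence `b(x₀, y₀) ∣ a(x₀, y₀)` forces `b(x₀, y₀) ∣ r(x₀)`.
For the boundedly many `x₀` where `r` or the leading coefficient of `B` vanishes, count all
`2N + 1` values of `y₀`. For any other `x₀`, `B(x₀, y)` has degree `d ≥ 1` in `y`, so it takes
each of the `2 τ(|r(x₀)|)` divisors of `r(x₀)` at most `d` times, and `τ(n) ≪ n ^ ε` together with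
`|r(x₀)| ≪ N ^ deg r` bounds this by `O(√N)`. If `b` is constant in `y`, swap the variables.
-/

open Finset
open scoped Polynomial.Bivariate

theorem Nat.succ_pow_le_pow_mul_two_pow (k e : ℕ) : (e + 1) ^ k ≤ k ^ k * 2 ^ e := by
  rcases k.eq_zero_or_pos with rfl | hk
  · simpa using Nat.one_le_two_pow
  have hq : e + 1 ≤ k * (e / k + 1) := by
    have := Nat.lt_mul_div_succ e hk
    omega
  calc (e + 1) ^ k ≤ (k * (e / k + 1)) ^ k := Nat.pow_le_pow_left hq k
    _ = k ^ k * (e / k + 1) ^ k := Nat.mul_pow ..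
    _ ≤ k ^ k * (2 ^ (e / k)) ^ k := by gcongr; exact Nat.lt_two_pow_self
    _ = k ^ k * 2 ^ (e / k * k) := by rw [← pow_mul]
    _ ≤ k ^ k * 2 ^ e := by gcongr; exacts [one_le_two, Nat.div_mul_le_self e k]

theorem Nat.exists_card_divisors_pow_le (k : ℕ) : ∃ C, ∀ n ≠ 0, #n.divisors ^ k ≤ C * n := by
  classical
  refine ⟨(k ^ k) ^ 2 ^ k, fun n hn => ?_⟩
  -- Each prime `p ∣ n` contributes `(e + 1) ^ k ≤ p ^ e` unless `p < 2 ^ k`.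
  have hfactor : ∀ p ∈ n.primeFactors, (n.factorization p + 1) ^ k ≤
      (if p < 2 ^ k then k ^ k else 1) * p ^ n.factorization p := by
    intro p hp
    have hp2 := (Nat.prime_of_mem_primeFactors hp).two_le
    split_ifs with hpk
    · calc (n.factorization p + 1) ^ k ≤ k ^ k * 2 ^ n.factorization p :=
            Nat.succ_pow_le_pow_mul_two_pow _ _
        _ ≤ k ^ k * p ^ n.factorization p := by gcongr
    · calc (n.factorization p + 1) ^ k ≤ (2 ^ n.factorization p) ^ k :=
            Nat.pow_le_pow_left Nat.lt_two_pow_self k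
        _ = (2 ^ k) ^ n.factorization p := by rw [← pow_mul, ← pow_mul, mul_comm]
        _ ≤ 1 * p ^ n.factorization p := by rw [one_mul]; gcongr; omega
  have hsmall : #(n.primeFactors.filter (· < 2 ^ k)) ≤ 2 ^ k :=
    (card_le_card fun p hp => by simpa using (mem_filter.mp hp).2).trans (card_range _).le
  calc #n.divisors ^ k = ∏ p ∈ n.primeFactors, (n.factorization p + 1) ^ k := by
        rw [Nat.card_divisors hn, prod_pow]
    _ ≤ ∏ p ∈ n.primeFactors, (if p < 2 ^ k then k ^ k else 1) * p ^ n.factorization p :=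
        prod_le_prod' hfactor
    _ = (k ^ k) ^ #(n.primeFactors.filter (· < 2 ^ k)) * n := by
        rw [prod_mul_distrib, prod_ite, prod_const, prod_const_one, mul_one,
          ← Nat.prod_primeFactors_pow_factorization hn]
    _ ≤ (k ^ k) ^ 2 ^ k * n := by
        gcongr
        exact Nat.pow_self_pos

namespace Polynomial

theorem card_filter_eval_eq_zero_le {R : Type*} [CommRing R] [IsDomain R] [DecidableEq R]
    {p : R[X]} (hp : p ≠ 0) (S : Finset R) :
    #(S.filter fun x => p.eval x = 0) ≤ p.natDegree :=
  card_le_degree_of_subset_roots fun _ hx => (mem_roots hp).2 (mem_filter.1 hx).2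

theorem abs_eval_le (P : ℤ[X]) {x N : ℤ} (hN : 1 ≤ N) (hx : |x| ≤ N) :
    |P.eval x| ≤ (∑ i ∈ range (P.natDegree + 1), |P.coeff i|) * N ^ P.natDegree := by
  rw [eval_eq_sum_range, sum_mul]
  refine (abs_sum_le_sum_abs _ _).trans (sum_le_sum fun i hi => ?_)
  rw [abs_mul, abs_pow]
  gcongr
  calc |x| ^ i ≤ N ^ i := pow_le_pow_left₀ (abs_nonneg x) hx i
    _ ≤ N ^ P.natDegree := pow_le_pow_right₀ hN (Nat.lt_succ_iff.mp (mem_range.mp hi))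

theorem exists_card_divisors_natAbs_eval_le (P : ℤ[X]) :
    ∃ M : ℝ, 0 ≤ M ∧ ∀ N : ℕ, 1 ≤ N → ∀ x : ℤ, |x| ≤ N → P.eval x ≠ 0 →
      (#(P.eval x).natAbs.divisors : ℝ) ≤ M * √N := by
  set B := ∑ i ∈ range (P.natDegree + 1), |P.coeff i|
  -- With `k = 2 (deg P + 1)`, `τ(n) ^ k ≤ C n` turns `|P x| ≪ N ^ deg P` into `τ ≪ √N`.
  set k := 2 * (P.natDegree + 1)
  obtain ⟨C, hC⟩ := Nat.exists_card_divisors_pow_le k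
  have hB : (0 : ℝ) ≤ B := by positivity
  refine ⟨C * B + 1, by positivity, fun N hN x hx hPx => ?_⟩
  have hτ : ((#(P.eval x).natAbs.divisors ^ k : ℕ) : ℤ) ≤ C * (B * N ^ P.natDegree) := by
    calc ((#(P.eval x).natAbs.divisors ^ k : ℕ) : ℤ) ≤ ((C * (P.eval x).natAbs : ℕ) : ℤ) := by
          exact_mod_cast hC _ (Int.natAbs_ne_zero.mpr hPx)
      _ = C * |P.eval x| := by push_cast; rfl
      _ ≤ C * (B * N ^ P.natDegree) := by gcongr; exact abs_eval_le P (by exact_mod_cast hN) hx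
  have hτ' : (#(P.eval x).natAbs.divisors : ℝ) ^ k ≤ (C * B + 1) ^ k * (√N) ^ k := by
    have hN1 : (1 : ℝ) ≤ N := by exact_mod_cast hN
    calc (#(P.eval x).natAbs.divisors : ℝ) ^ k ≤ C * (B * N ^ P.natDegree) := by
          exact_mod_cast hτ
      _ ≤ (C * B + 1) * N ^ (P.natDegree + 1) := by
          rw [← mul_assoc, pow_succ]
          exact mul_le_mul (by linarith) (le_mul_of_one_le_right (by positivity) hN1)
            (by positivity) (by positivity)
      _ ≤ (C * B + 1) ^ k * (√N) ^ k := by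
          rw [pow_mul (√(N : ℝ)), Real.sq_sqrt (by positivity)]
          gcongr
          exact le_self_pow₀ (le_add_of_nonneg_left (mul_nonneg C.cast_nonneg hB)) (by omega)
  rw [← mul_pow] at hτ'
  exact (pow_le_pow_iff_left₀ (by positivity) (by positivity) (by omega)).mp hτ'

theorem card_filter_natAbs_eval_eq_le {q : ℤ[X]} (hq : 0 < q.natDegree) (m : ℕ) (S : Finset ℤ) :
    #(S.filter fun y => (q.eval y).natAbs = m) ≤ 2 * q.natDegree := by
  -- `|q y| = m` exactly when `y` is a root of `q ^ 2 - m ^ 2`.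
  have hdeg : (q ^ 2 - C ((m : ℤ) ^ 2)).natDegree = 2 * q.natDegree := by
    rw [natDegree_sub_C, natDegree_pow, mul_comm]
  calc #(S.filter fun y => (q.eval y).natAbs = m)
      ≤ #(S.filter fun y => (q ^ 2 - C ((m : ℤ) ^ 2)).eval y = 0) := by
        refine card_le_card (monotone_filter_right S fun y _ hy => ?_)
        rw [eval_sub, eval_pow, eval_C, ← hy, Int.natAbs_sq, sub_self]
    _ ≤ 2 * q.natDegree := by
        refine hdeg ▸ card_filter_eval_eq_zero_le (ne_zero_of_natDegree_gt (n := 0) ?_) S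
        omega

theorem card_filter_eval_dvd_le {q : ℤ[X]} (hq : 0 < q.natDegree) {z : ℤ} (hz : z ≠ 0)
    (S : Finset ℤ) :
    #(S.filter fun y => q.eval y ∣ z) ≤ 2 * q.natDegree * #z.natAbs.divisors := by
  have hmaps : ∀ y ∈ S.filter (fun y => q.eval y ∣ z), (q.eval y).natAbs ∈ z.natAbs.divisors :=
    fun y hy => Nat.mem_divisors.mpr
      ⟨Int.natAbs_dvd_natAbs.mpr (mem_filter.mp hy).2, Int.natAbs_ne_zero.mpr hz⟩
  refine card_le_mul_card_image_of_maps_to hmaps _ fun m _ => ?_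
  exact (card_le_card (filter_subset_filter _ (filter_subset _ S))).trans
    (card_filter_natAbs_eval_eq_le hq m S)

section Gauss

variable {R : Type*} [CommRing R] [IsDomain R] [UniqueFactorizationMonoid R]

theorem exists_prime_dvd_of_natDegree_pos {G : R[X]} (hG : 0 < G.natDegree) :
    ∃ π : R[X], Prime π ∧ 0 < π.natDegree ∧ π ∣ G := by
  induction G using UniqueFactorizationMonoid.induction_on_prime with
  | h₁ => simp at hG
  | h₂ u hu => simp [natDegree_eq_zero_of_isUnit hu] at hG
  | h₃ G p hG0 hp ih =>
    by_cases hpdeg : 0 < p.natDegree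
    · exact ⟨p, hp, hpdeg, dvd_mul_right p G⟩
    · rw [natDegree_mul hp.ne_zero hG0] at hG
      obtain ⟨π, hπ, hπdeg, hπG⟩ := ih (by omega)
      exact ⟨π, hπ, hπdeg, hπG.mul_left p⟩

variable (K : Type*) [Field K] [Algebra R K] [IsFractionRing R K]

theorem exists_natDegree_pos_dvd_of_dvd_map {q : K[X]} (hq : 0 < q.natDegree) :
    ∃ π : R[X], 0 < π.natDegree ∧ ∀ P : R[X], q ∣ P.map (algebraMap R K) → π ∣ P := by
  have hinj := IsFractionRing.injective R K
  obtain ⟨c, hc, hG⟩ := IsLocalization.integerNormalization_spec (nonZeroDivisors R) q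
  set G := IsLocalization.integerNormalization (nonZeroDivisors R) q
  have hc0 : algebraMap R K c ≠ 0 := IsFractionRing.to_map_ne_zero_of_mem_nonZeroDivisors hc
  have hGdeg : 0 < G.natDegree := by
    rw [← natDegree_map_eq_of_injective hinj, hG, ← algebraMap_smul K, smul_eq_C_mul,
      natDegree_C_mul hc0]
    exact hq
  obtain ⟨π, hπ, hπdeg, hπG⟩ := exists_prime_dvd_of_natDegree_pos hGdeg
  refine ⟨π, hπdeg, fun P ⟨h, hP⟩ => ?_⟩
  obtain ⟨e, he, hH⟩ := IsLocalization.integerNormalization_spec (nonZeroDivisors R) h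
  set H := IsLocalization.integerNormalization (nonZeroDivisors R) h
  -- Clear the denominators of `q * h = P`.
  have hGH : G * H = C (c * e) * P := by
    refine map_injective _ hinj ?_
    rw [Polynomial.map_mul, Polynomial.map_mul, hG, hH, map_C, hP, ← algebraMap_smul K c,
      ← algebraMap_smul K e, smul_eq_C_mul, smul_eq_C_mul, map_mul, C_mul]
    ring
  have hce : C (c * e) ≠ 0 := C_ne_zero.mpr (mul_ne_zero (nonZeroDivisors.ne_zero hc)
    (nonZeroDivisors.ne_zero he))
  refine (hπ.dvd_or_dvd (hGH ▸ hπG.mul_right H)).resolve_left fun hπc => ?_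
  have := natDegree_le_of_dvd hπc hce
  rw [natDegree_C] at this
  omega

theorem isCoprime_map_of_forall_dvd_natDegree_eq_zero {A B : R[X]} (hB : B ≠ 0)
    (hAB : ∀ H : R[X], H ∣ A → H ∣ B → H.natDegree = 0) :
    IsCoprime (A.map (algebraMap R K)) (B.map (algebraMap R K)) := by
  refine isCoprime_of_irreducible_dvd
    (fun h => hB (map_injective _ (IsFractionRing.injective R K) (by simp [h.2])))
    fun z hz hzA hzB => ?_
  obtain ⟨π, hπdeg, hπ⟩ := exists_natDegree_pos_dvd_of_dvd_map (R := R) K hz.natDegree_pos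
  exact hπdeg.ne' (hAB π (hπ A hzA) (hπ B hzB))

theorem exists_mul_add_mul_eq_C_of_forall_dvd_natDegree_eq_zero {A B : R[X]}
    (hB : 0 < B.natDegree) (hAB : ∀ H : R[X], H ∣ A → H ∣ B → H.natDegree = 0) :
    ∃ r ≠ 0, ∃ U V : R[X], A * U + B * V = C r := by
  obtain ⟨U, V, -, -, hUV⟩ :=
    exists_mul_add_mul_eq_C_resultant A B le_rfl le_rfl (Or.inr hB.ne')
  refine ⟨resultant A B, fun h => ?_, U, V, hUV⟩
  have hinj := IsFractionRing.injective R (FractionRing R)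
  have := resultant_ne_zero _ _ (isCoprime_map_of_forall_dvd_natDegree_eq_zero (FractionRing R)
    (ne_zero_of_natDegree_gt hB) hAB)
  rw [natDegree_map_eq_of_injective hinj, natDegree_map_eq_of_injective hinj,
    resultant_map_map, h, map_zero] at this
  exact this rfl

end Gauss

end Polynomial

namespace Polynomial.Bivariate

theorem evalEval_equivMvPolynomial_symm {R : Type*} [CommRing R] (f : MvPolynomial (Fin 2) R)
    (x y : R) :
    ((equivMvPolynomial R).symm f).evalEval x y = MvPolynomial.eval ![x, y] f := by
  obtain ⟨P, rfl⟩ := (equivMvPolynomial R).surjective f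
  rw [AlgEquiv.symm_apply_apply]
  induction P using Polynomial.induction_on' with
  | add p q hp hq => simp [hp, hq]
  | monomial n a =>
    induction a using Polynomial.induction_on' with
    | add p q hp hq => simp_all
    | monomial m c => simp [← C_mul_X_pow_eq_monomial, evalEval_C]

theorem evalEval_swap {R : Type*} [CommSemiring R] (x y : R) (P : R[X][Y]) :
    (swap P).evalEval x y = P.evalEval y x := by
  have := aevalAeval_swap (R := R) x y P
  rwa [coe_aevalAeval_eq_evalEval, coe_aevalAeval_eq_evalEval] at this

noncomputable def divisibilityFiber (A B : ℤ[X][Y]) (N : ℕ) (x : ℤ) : Finset ℤ :=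
  (Icc (-N : ℤ) N).filter fun y => B.evalEval x y ≠ 0 ∧ B.evalEval x y ∣ A.evalEval x y

noncomputable def divisibilityPoints (A B : ℤ[X][Y]) (N : ℕ) : Finset (ℤ × ℤ) :=
  (Icc (-N : ℤ) N ×ˢ Icc (-N : ℤ) N).filter fun p =>
    B.evalEval p.1 p.2 ≠ 0 ∧ B.evalEval p.1 p.2 ∣ A.evalEval p.1 p.2

variable {A B : ℤ[X][Y]}

theorem card_divisibilityPoints_eq_sum (A B : ℤ[X][Y]) (N : ℕ) :
    #(divisibilityPoints A B N) = ∑ x ∈ Icc (-N : ℤ) N, #(divisibilityFiber A B N x) := by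
  simp only [divisibilityPoints, divisibilityFiber, card_filter, sum_product]

theorem card_divisibilityPoints_swap (A B : ℤ[X][Y]) (N : ℕ) :
    #(divisibilityPoints (swap A) (swap B) N) = #(divisibilityPoints A B N) := by
  refine card_nbij' Prod.swap Prod.swap ?_ ?_ (fun _ _ => rfl) (fun _ _ => rfl) <;>
    · rintro ⟨x, y⟩
      simp only [divisibilityPoints, coe_filter, mem_product, Set.mem_ofPred_eq, Prod.swap_prod_mk,
        evalEval_swap]
      tauto

theorem card_divisibilityFiber_le {r : ℤ[X]} {U V : ℤ[X][Y]} (hB : 0 < B.natDegree)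
    (hUV : A * U + B * V = C r) {x : ℤ} (hx : (r * B.leadingCoeff).eval x ≠ 0) (N : ℕ) :
    #(divisibilityFiber A B N x) ≤ 2 * B.natDegree * #(r.eval x).natAbs.divisors := by
  rw [eval_mul, mul_ne_zero_iff] at hx
  have hdeg : (B.map (evalRingHom x)).natDegree = B.natDegree :=
    natDegree_map_of_leadingCoeff_ne_zero _ hx.2
  have hdvd : ∀ y, B.evalEval x y ∣ A.evalEval x y → B.evalEval x y ∣ r.eval x := fun y h => by
    have := congrArg (evalEval x y) hUV
    rw [evalEval_add, evalEval_mul, evalEval_mul, evalEval_C] at this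
    exact this ▸ dvd_add (h.mul_right _) (dvd_mul_right _ _)
  calc #(divisibilityFiber A B N x)
      ≤ #((Icc (-N : ℤ) N).filter fun y => (B.map (evalRingHom x)).eval y ∣ r.eval x) :=
        card_le_card (monotone_filter_right _ fun y _ h => by
          rw [map_evalRingHom_eval]; exact hdvd y h.2)
    _ ≤ 2 * B.natDegree * #(r.eval x).natAbs.divisors :=
        hdeg ▸ card_filter_eval_dvd_le (hdeg ▸ hB) hx.1 _

theorem exists_card_divisibilityPoints_le_of_natDegree_pos (hB : 0 < B.natDegree)
    (hAB : ∀ H : ℤ[X][Y], H ∣ A → H ∣ B → H.natDegree = 0) :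
    ∃ K : ℝ, ∀ N : ℕ, 1 ≤ N → (#(divisibilityPoints A B N) : ℝ) ≤ K * (N * √N) := by
  obtain ⟨r, hr, U, V, hUV⟩ := exists_mul_add_mul_eq_C_of_forall_dvd_natDegree_eq_zero hB hAB
  obtain ⟨M, hM0, hM⟩ := exists_card_divisors_natAbs_eval_le r
  set W := r * B.leadingCoeff
  have hW : W ≠ 0 := mul_ne_zero hr (leadingCoeff_ne_zero.mpr (ne_zero_of_natDegree_gt hB))
  set d := B.natDegree
  refine ⟨3 * W.natDegree + 6 * d * M, fun N hN => ?_⟩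
  set I := Icc (-N : ℤ) N
  have hI : (#I : ℝ) = 2 * N + 1 := by
    have : #I = 2 * N + 1 := by simp only [I, Int.card_Icc]; omega
    exact_mod_cast this
  have hbad : ∀ x ∈ I.filter (fun x => W.eval x = 0), (#(divisibilityFiber A B N x) : ℝ) ≤ #I :=
    fun x _ => by exact_mod_cast card_le_card (filter_subset _ _)
  have hgood : ∀ x ∈ I.filter (fun x => W.eval x ≠ 0),
      (#(divisibilityFiber A B N x) : ℝ) ≤ 2 * d * (M * √N) := by
    intro x hx
    obtain ⟨hxI, hWx⟩ := mem_filter.mp hx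
    have hrx : r.eval x ≠ 0 := left_ne_zero_of_mul (eval_mul (p := r) ▸ hWx)
    calc (#(divisibilityFiber A B N x) : ℝ) ≤ 2 * d * #(r.eval x).natAbs.divisors := by
          exact_mod_cast card_divisibilityFiber_le hB hUV hWx N
      _ ≤ 2 * d * (M * √N) := by
          gcongr
          exact hM N hN x (abs_le.mpr (mem_Icc.mp hxI)) hrx
  have hN1 : (1 : ℝ) ≤ N := by exact_mod_cast hN
  have hsqrt : 1 ≤ √(N : ℝ) := Real.one_le_sqrt.mpr hN1
  calc (#(divisibilityPoints A B N) : ℝ) = ∑ x ∈ I, (#(divisibilityFiber A B N x) : ℝ) := by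
        rw [card_divisibilityPoints_eq_sum]; push_cast; rfl
    _ = ∑ x ∈ I.filter (fun x => W.eval x = 0), (#(divisibilityFiber A B N x) : ℝ) +
          ∑ x ∈ I.filter (fun x => W.eval x ≠ 0), (#(divisibilityFiber A B N x) : ℝ) :=
        (sum_filter_add_sum_filter_not _ _ _).symm
    _ ≤ #(I.filter fun x => W.eval x = 0) * #I +
          #(I.filter fun x => W.eval x ≠ 0) * (2 * d * (M * √N)) := by
        simpa only [nsmul_eq_mul] using
          add_le_add (sum_le_card_nsmul _ _ _ hbad) (sum_le_card_nsmul _ _ _ hgood)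
    _ ≤ W.natDegree * (2 * N + 1) + (2 * N + 1) * (2 * d * (M * √N)) := by
        rw [← hI]
        gcongr
        · exact_mod_cast card_filter_eval_eq_zero_le hW I
        · exact filter_subset _ _
    _ ≤ W.natDegree * (3 * (N * √N)) + 3 * N * (2 * d * (M * √N)) := by
        have h3 : (2 * N + 1 : ℝ) ≤ 3 * N := by linarith
        gcongr
        calc (2 * N + 1 : ℝ) ≤ 3 * N := h3
          _ ≤ 3 * (N * √N) := by gcongr; exact le_mul_of_one_le_right (by positivity) hsqrt
    _ = (3 * W.natDegree + 6 * d * M) * (N * √N) := by ring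

theorem exists_card_divisibilityPoints_le (hB : ∀ c, B ≠ CC c)
    (hAB : ∀ H : ℤ[X][Y], H ∣ A → H ∣ B → ∃ c, H = CC c) :
    ∃ K : ℝ, ∀ N : ℕ, 1 ≤ N → (#(divisibilityPoints A B N) : ℝ) ≤ K * (N * √N) := by
  have natDegree_eq_zero {A B : ℤ[X][Y]} (h : ∀ H : ℤ[X][Y], H ∣ A → H ∣ B → ∃ c, H = CC c)
      (H : ℤ[X][Y]) (hA : H ∣ A) (hB : H ∣ B) : H.natDegree = 0 := by
    obtain ⟨c, rfl⟩ := h H hA hB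
    exact natDegree_C _
  by_cases hdeg : 0 < B.natDegree
  · exact exists_card_divisibilityPoints_le_of_natDegree_pos hdeg (natDegree_eq_zero hAB)
  -- Otherwise `B` is nonconstant in the inner variable: swap the variables.
  have hdeg' : 0 < (swap B).natDegree := by
    by_contra h'
    rw [not_lt, nonpos_iff_eq_zero] at hdeg h'
    rw [eq_C_of_natDegree_eq_zero hdeg, swap_C,
      natDegree_map_eq_of_injective C_injective] at h'
    exact hB _ (by rw [eq_C_of_natDegree_eq_zero hdeg, eq_C_of_natDegree_eq_zero h'])
  have hAB' : ∀ H : ℤ[X][Y], H ∣ swap A → H ∣ swap B → ∃ c, H = CC c :=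
    fun H hA hB => by
      obtain ⟨c, hc⟩ := hAB (swap H)
        (by simpa only [swap_swap_apply] using _root_.map_dvd swap hA)
        (by simpa only [swap_swap_apply] using _root_.map_dvd swap hB)
      exact ⟨c, by rw [← swap_swap_apply H, hc, swap_C_C]⟩
  obtain ⟨K, hK⟩ :=
    exists_card_divisibilityPoints_le_of_natDegree_pos hdeg' (natDegree_eq_zero hAB')
  exact ⟨K, fun N hN => card_divisibilityPoints_swap A B N ▸ hK N hN⟩

theorem coe_divisibilityPoints_equivMvPolynomial_symm (a b : MvPolynomial (Fin 2) ℤ) (N : ℕ) :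
    (divisibilityPoints ((equivMvPolynomial ℤ).symm a) ((equivMvPolynomial ℤ).symm b) N :
      Set (ℤ × ℤ)) = {p : ℤ × ℤ | |p.1| ≤ (N : ℤ) ∧ |p.2| ≤ (N : ℤ) ∧
        MvPolynomial.eval ![p.1, p.2] b ≠ 0 ∧
        MvPolynomial.eval ![p.1, p.2] b ∣ MvPolynomial.eval ![p.1, p.2] a} := by
  ext p
  simp [divisibilityPoints, evalEval_equivMvPolynomial_symm, abs_le, and_assoc]

theorem exists_card_divisibilityPoints_equivMvPolynomial_symm_le {a b : MvPolynomial (Fin 2) ℤ}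
    (hab : ∀ h : MvPolynomial (Fin 2) ℤ, h ∣ a → h ∣ b → h.totalDegree = 0)
    (hb : 0 < b.totalDegree) :
    ∃ K : ℝ, ∀ N : ℕ, 1 ≤ N → (#(divisibilityPoints ((equivMvPolynomial ℤ).symm a)
      ((equivMvPolynomial ℤ).symm b) N) : ℝ) ≤ K * (N * √N) := by
  refine exists_card_divisibilityPoints_le (fun c h => ?_) fun H hHa hHb => ?_
  · rw [AlgEquiv.symm_apply_eq, equivMvPolynomial_C_C] at h
    rw [h, MvPolynomial.totalDegree_C] at hb
    exact lt_irrefl 0 hb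
  · have := hab (equivMvPolynomial ℤ H)
      (by simpa using _root_.map_dvd (equivMvPolynomial ℤ) hHa)
      (by simpa using _root_.map_dvd (equivMvPolynomial ℤ) hHb)
    rw [MvPolynomial.totalDegree_eq_zero_iff_eq_C] at this
    exact ⟨_, by rw [← (equivMvPolynomial ℤ).symm_apply_apply H, this, equivMvPolynomial_symm_C]⟩

end Polynomial.Bivariate

open MvPolynomial

/-- Lemma 5: let `a(x, y), b(x, y) ∈ ℤ[x, y]` be coprime (no common non-constant factor)
with `b` non-constant.  Then there is a constant `C` such that for all large enough `N`, the
number of integer pairs `(x₀, y₀) ∈ [-N, N]²` with `b(x₀, y₀) ≠ 0` for which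
`a(x₀, y₀)/b(x₀, y₀)` is an integer is at most `C · N^(3/2)`. -/
theorem rational_function_integer_values_rare
    (a b : MvPolynomial (Fin 2) ℤ)
    (hcop : ∀ h : MvPolynomial (Fin 2) ℤ, h ∣ a → h ∣ b → h.totalDegree = 0)
    (hb : 0 < b.totalDegree) :
    ∃ C : ℝ, ∃ N₀ : ℕ, ∀ N : ℕ, N₀ ≤ N →
      ({p : ℤ × ℤ | |p.1| ≤ (N : ℤ) ∧ |p.2| ≤ (N : ℤ) ∧
          eval ![p.1, p.2] b ≠ 0 ∧ eval ![p.1, p.2] b ∣ eval ![p.1, p.2] a}.ncard : ℝ)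
        ≤ C * (N : ℝ) ^ ((3 : ℝ) / 2) := by
  obtain ⟨K, hK⟩ :=
    Polynomial.Bivariate.exists_card_divisibilityPoints_equivMvPolynomial_symm_le hcop hb
  refine ⟨K, 1, fun N hN => ?_⟩
  rw [← Polynomial.Bivariate.coe_divisibilityPoints_equivMvPolynomial_symm, Set.ncard_coe_finset,
    show (3 : ℝ) / 2 = 1 + 1 / 2 by norm_num, Real.rpow_add' (Nat.cast_nonneg _) (by norm_num),
    Real.rpow_one, ← Real.sqrt_eq_rpow]
  exact hK N hN
end

section
/- Let P, Q : ℂ² → ℂ² be polynomial maps with J(P) identically equal to 1 and P ∘ Q = P. If Q has a fixed point, i.e., there exists (a,b) ∈ ℂ² with Q(a,b) = (a,b), then Q is the identity map. -/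
/-!
Since `J(P) ≡ 1`, the inverse function theorem makes `P` injective near the fixed point `a` of
`Q`; as `Q` is continuous with `Q a = a`, the identity `P ∘ Q = P` forces `Q = id` near `a`.
Polynomial maps are analytic, so the identity principle propagates this to all of `ℂ²`.
-/

open MvPolynomial Filter Topology

namespace MvPolynomial

noncomputable def jacobian {R σ ι : Type*} [CommSemiring R] (F : ι → MvPolynomial σ R) :
    Matrix ι σ (MvPolynomial σ R) :=
  Matrix.of fun i j => pderiv j (F i)

variable {𝕜 σ : Type*} [NontriviallyNormedField 𝕜] [Fintype σ]

theorem hasStrictFDerivAt_eval (p : MvPolynomial σ 𝕜) (a : σ → 𝕜) :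
    HasStrictFDerivAt (fun z => eval z p)
      (∑ j, eval a (pderiv j p) • (ContinuousLinearMap.proj j : (σ → 𝕜) →L[𝕜] 𝕜)) a := by
  classical
  induction p using MvPolynomial.induction_on with
  | C c =>
    simp only [eval_C]
    refine (hasStrictFDerivAt_const (𝕜 := 𝕜) c a).congr_fderiv ?_
    ext v
    simp
  | add p q hp hq =>
    simp only [map_add]
    refine (hp.add hq).congr_fderiv ?_
    ext v
    simp [Finset.sum_add_distrib, add_mul]
  | mul_X p i hp =>
    simp only [eval_mul, eval_X]
    refine (hp.mul (hasStrictFDerivAt_apply i a)).congr_fderiv ?_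
    ext v
    simp [Pi.single_apply, Finset.sum_add_distrib, Finset.mul_sum, add_mul, apply_ite, mul_assoc]

theorem exists_hasStrictFDerivAt_eval_pi_of_isUnit [CompleteSpace 𝕜] [DecidableEq σ]
    {F : σ → MvPolynomial σ 𝕜} {a : σ → 𝕜} (h : IsUnit (eval a (jacobian F).det)) :
    ∃ e : (σ → 𝕜) ≃L[𝕜] (σ → 𝕜),
      HasStrictFDerivAt (fun z i => eval z (F i)) (e : (σ → 𝕜) →L[𝕜] (σ → 𝕜)) a := by
  set M := (jacobian F).map (eval a)
  have hM : IsUnit M.det := by rwa [RingHom.map_det] at h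
  refine ⟨(M.toLinearEquiv' (M.invertibleOfIsUnitDet hM)).toContinuousLinearEquiv, ?_⟩
  refine (hasStrictFDerivAt_pi.2 fun i => hasStrictFDerivAt_eval (F i) a).congr_fderiv ?_
  ext v i
  change _ = Matrix.toLin' M v i
  simp [M, jacobian, Matrix.mulVec, dotProduct]

end MvPolynomial

theorem HasStrictFDerivAt.eventuallyEq_id_of_comp {𝕜 E F : Type*} [NontriviallyNormedField 𝕜]
    [NormedAddCommGroup E] [NormedSpace 𝕜 E] [CompleteSpace E]
    [NormedAddCommGroup F] [NormedSpace 𝕜 F]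
    {f : E → F} {f' : E ≃L[𝕜] F} {g : E → E} {a : E}
    (hf : HasStrictFDerivAt f (f' : E →L[𝕜] F) a) (hg : ContinuousAt g a) (hga : g a = a)
    (hfg : ∀ᶠ z in 𝓝 a, f (g z) = f z) : g =ᶠ[𝓝 a] id := by
  have hleft := hf.eventually_left_inverse
  have hleft_g : ∀ᶠ z in 𝓝 a, hf.localInverse f f' a (f (g z)) = g z :=
    (hga ▸ hg.tendsto).eventually hleft
  filter_upwards [hleft, hleft_g, hfg] with z hz hgz hfgz
  rw [id, ← hgz, hfgz, hz]

/-- Lemma 6: let `P, Q : ℂ² → ℂ²` be polynomial maps with `J(P) ≡ 1` and `P ∘ Q = P`.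
If `Q` has a fixed point, then `Q` is the identity map. -/
theorem fixed_point_implies_identity
    (F G : Fin 2 → MvPolynomial (Fin 2) ℂ)
    (hJ : (Matrix.of fun i j : Fin 2 => MvPolynomial.pderiv j (F i)).det = 1)
    (hPQ : ∀ z : Fin 2 → ℂ,
      (fun i => eval (fun j => eval z (G j)) (F i)) = fun i => eval z (F i))
    (hfix : ∃ z : Fin 2 → ℂ, (fun i => eval z (G i)) = z) :
    ∀ z : Fin 2 → ℂ, (fun i => eval z (G i)) = z := by
  obtain ⟨a, ha⟩ := hfix
  have hJa : IsUnit (eval a (jacobian F).det) := by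
    rw [jacobian, hJ, map_one]
    exact isUnit_one
  obtain ⟨e, hF⟩ := exists_hasStrictFDerivAt_eval_pi_of_isUnit hJa
  have hG : AnalyticOnNhd ℂ (fun z i => eval z (G i)) Set.univ :=
    .pi fun i => AnalyticOnNhd.eval_mvPolynomial (G i)
  have hloc : (fun z i => eval z (G i)) =ᶠ[𝓝 a] id :=
    hF.eventuallyEq_id_of_comp (hG a trivial).continuousAt ha (.of_forall hPQ)
  exact congrFun (hG.eq_of_eventuallyEq analyticOnNhd_id hloc)
end

section
/- Let P, Q : ℂ² → ℂ² be polynomial maps with J(P) identically equal to 1 and P ∘ Q = P. Then Q has finite order: there exists a positive integer t ≥ 1 such that the t-fold composition Qᵗ = Q ∘ Q ∘ ⋯ ∘ Q (t times) is the identity map. -/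
/-! The hypothesis `P ∘ Q = P` says that the substitution `φ : p ↦ p(G)` on `ℂ[x, y]` fixes
`ℂ[F₁, F₂]`. By the Jacobian criterion (in characteristic zero) `F₁, F₂` are algebraically
independent, hence a transcendence basis of `ℂ[x, y]`, so `x` and `y` are algebraic over
`ℂ[F₁, F₂]`. Every power of `φ` maps `x` and `y` to roots of fixed nonzero polynomials over
`ℂ[F₁, F₂]`, so two distinct powers of `φ` agree. Since a nonzero kernel of `φ` would meet
`ℂ[F₁, F₂]`, `φ` is injective and therefore of finite order; so is `Q`. -/

open MvPolynomial

namespace MvPolynomial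

variable {σ τ R : Type*}

noncomputable def jacobianMatrix [CommSemiring R] (v : τ → MvPolynomial σ R) :
    Matrix τ σ (MvPolynomial σ R) :=
  Matrix.of fun i j => pderiv j (v i)

section CommSemiring

variable [CommSemiring R]

theorem pderiv_aeval [Fintype σ] (G : σ → MvPolynomial τ R) (p : MvPolynomial σ R) (j : τ) :
    pderiv j (aeval G p) = ∑ k, aeval G (pderiv k p) * pderiv j (G k) := by
  classical
  induction p using MvPolynomial.induction_on with
  | C a => simp
  | add p q hp hq => simp only [map_add, hp, hq, add_mul, Finset.sum_add_distrib]
  | mul_X p i hp =>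
    simp only [map_mul, aeval_X, Derivation.leibniz, smul_eq_mul, map_add, hp, pderiv_X,
      Pi.single_apply, add_mul, Finset.sum_add_distrib, Finset.mul_sum]
    simp [mul_comm, mul_assoc]

theorem totalDegree_pderiv_lt {i : σ} {p : MvPolynomial σ R} (h : pderiv i p ≠ 0) :
    (pderiv i p).totalDegree < p.totalDegree := by
  have hsucc : ∀ m ∈ (pderiv i p).support, (m.sum fun _ e => e) + 1 ≤ p.totalDegree := by
    intro m hm
    have hm' : m + Finsupp.single i 1 ∈ p.support := by
      rw [mem_support_iff, coeff_pderiv] at hm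
      exact mem_support_iff.mpr (left_ne_zero_of_mul hm)
    simpa [Finsupp.sum_add_index', Finsupp.sum_single_index] using le_totalDegree hm'
  obtain ⟨m, hm⟩ := support_nonempty.mpr h
  rw [totalDegree, Finset.sup_lt_iff (lt_of_lt_of_le (Nat.succ_pos _) (hsucc m hm))]
  exact fun m hm => hsucc m hm

end CommSemiring

theorem exists_pderiv_ne_zero [CommSemiring R] [NoZeroDivisors R] [CharZero R]
    {p : MvPolynomial σ R} (h : p.totalDegree ≠ 0) : ∃ i, pderiv i p ≠ 0 := by
  obtain ⟨m, hm, i, hi⟩ : ∃ m ∈ p.support, ∃ i, m i ≠ 0 := by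
    simpa [totalDegree_eq_zero_iff] using h
  refine ⟨i, ne_of_apply_ne (coeff (m - Finsupp.single i 1)) ?_⟩
  have hle : Finsupp.single i 1 ≤ m := by
    simpa [Finsupp.single_le_iff] using Nat.one_le_iff_ne_zero.mpr hi
  rw [coeff_pderiv, tsub_add_cancel_of_le hle, coeff_zero]
  exact mul_ne_zero (mem_support_iff.mp hm) (Nat.cast_add_one_ne_zero _)

section Jacobian

variable [Fintype σ] [DecidableEq σ] [CommRing R] [IsDomain R]

theorem aeval_pderiv_eq_zero_of_aeval_eq_zero {v : σ → MvPolynomial σ R}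
    (hv : (jacobianMatrix v).det ≠ 0) {p : MvPolynomial σ R} (hp : aeval v p = 0) (k : σ) :
    aeval v (pderiv k p) = 0 := by
  have hchain : Matrix.vecMul (fun k => aeval v (pderiv k p)) (jacobianMatrix v) = 0 := by
    funext j
    rw [Pi.zero_apply, ← map_zero (pderiv j), ← hp, pderiv_aeval]
    rfl
  exact congrFun (Matrix.eq_zero_of_vecMul_eq_zero hv hchain) k

theorem algebraicIndependent_of_det_jacobianMatrix_ne_zero [CharZero R]
    {v : σ → MvPolynomial σ R} (hv : (jacobianMatrix v).det ≠ 0) :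
    AlgebraicIndependent R v := by
  rw [algebraicIndependent_iff]
  intro p
  induction hd : p.totalDegree using Nat.strong_induction_on generalizing p with
  | _ n ih =>
    intro hp
    have hpderiv : ∀ k, pderiv k p = 0 := fun k => by
      by_contra hk
      exact hk (ih _ (hd ▸ totalDegree_pderiv_lt hk) _ rfl
        (aeval_pderiv_eq_zero_of_aeval_eq_zero hv hp k))
    have hconst : p = C (p.coeff 0) := totalDegree_eq_zero_iff_eq_C.mp <| by
      by_contra h0
      obtain ⟨k, hk⟩ := exists_pderiv_ne_zero h0
      exact hk (hpderiv k)
    rw [hconst, aeval_C, algebraMap_eq, C_eq_zero] at hp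
    rw [hconst, hp, C_0]

end Jacobian

theorem isTranscendenceBasis_of_algebraicIndependent [Finite σ] [CommRing R] [IsDomain R]
    {v : σ → MvPolynomial σ R} (hv : AlgebraicIndependent R v) : IsTranscendenceBasis R v :=
  hv.isTranscendenceBasis_of_lift_trdeg_le_of_finite (by simp)

theorem eval_aeval [CommSemiring R] (G : σ → MvPolynomial τ R) (z : τ → R)
    (p : MvPolynomial σ R) : eval z (aeval G p) = eval (fun i => eval z (G i)) p := by
  rw [aeval_eq_bind₁]
  exact eval₂Hom_bind₁ _ _ _ _

theorem eval_iterate_aeval [CommSemiring R] (G : σ → MvPolynomial σ R) (n : ℕ) (z : σ → R)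
    (p : MvPolynomial σ R) :
    eval z ((aeval G)^[n] p) = eval ((fun z i => eval z (G i))^[n] z) p := by
  induction n generalizing p with
  | zero => rfl
  | succ n ih => rw [Function.iterate_succ_apply, ih, Function.iterate_succ_apply', eval_aeval]

end MvPolynomial

namespace AlgHom

section CommSemiring

variable {R A : Type*} [CommSemiring R] [CommSemiring A] [Algebra R A]

def extendScalarsOfLeEqualizer (f : A →ₐ[R] A) {S : Subalgebra R A}
    (hS : S ≤ equalizer f (AlgHom.id R A)) : A →ₐ[S] A :=
  { f.toRingHom with commutes' := fun s => hS s.2 }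

theorem isOfFinOrder_of_pow_eq_pow {f : A →ₐ[R] A} (hf : Function.Injective f) {m n : ℕ}
    (hmn : m < n) (h : f ^ m = f ^ n) : IsOfFinOrder f := by
  refine isOfFinOrder_iff_pow_eq_one.mpr ⟨n - m, by omega, AlgHom.ext fun x => ?_⟩
  apply (coe_pow f m ▸ hf.iterate m)
  rw [← mul_apply, ← pow_add, Nat.add_sub_cancel' hmn.le, ← h]
  rfl

end CommSemiring

section Algebraic

variable {A R : Type*} [CommRing A] [CommRing R] [IsDomain R] [Algebra A R] [FaithfulSMul A R]
  [Algebra.IsAlgebraic A R]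

theorem injective_of_isAlgebraic (f : R →ₐ[A] R) : Function.Injective f := by
  rw [injective_iff_map_eq_zero]
  intro x hx
  by_contra hx0
  refine Ideal.comap_ne_bot_of_algebraic_mem hx0 (RingHom.mem_ker.mpr hx)
    (Algebra.IsAlgebraic.isAlgebraic (R := A) x) ?_
  rw [eq_bot_iff]
  intro a ha
  rw [Ideal.mem_comap, RingHom.mem_ker, f.commutes] at ha
  exact (FaithfulSMul.algebraMap_injective A R).eq_iff.mp (ha.trans (map_zero _).symm)

theorem isOfFinOrder_of_isAlgebraic [Algebra.FiniteType A R] (f : R →ₐ[A] R) :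
    IsOfFinOrder f := by
  obtain ⟨s, hs⟩ := Algebra.FiniteType.out (R := A) (A := R)
  choose p hp0 hp using fun x : s => Algebra.IsAlgebraic.isAlgebraic (R := A) (x : R)
  have hroot (n : ℕ) (x : s) : (f ^ n) x ∈ (p x).rootSet R := by
    refine Polynomial.mem_rootSet'.mpr ⟨?_, ?_⟩
    · exact (Polynomial.map_ne_zero_iff (FaithfulSMul.algebraMap_injective A R)).mpr (hp0 x)
    · rw [Polynomial.aeval_algHom_apply, hp, map_zero]
  obtain ⟨m, n, hmn, heq⟩ := Finite.exists_ne_map_eq_of_infinite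
    fun n (x : s) => (⟨(f ^ n) x, hroot n x⟩ : (p x).rootSet R)
  have hpow : f ^ m = f ^ n := ext_of_adjoin_eq_top hs
    fun x hx => congrArg Subtype.val (congrFun heq ⟨x, hx⟩)
  rcases hmn.lt_or_gt with hlt | hlt
  · exact isOfFinOrder_of_pow_eq_pow f.injective_of_isAlgebraic hlt hpow
  · exact isOfFinOrder_of_pow_eq_pow f.injective_of_isAlgebraic hlt hpow.symm

end Algebraic

end AlgHom

/-- Lemma 7: let `P, Q : ℂ² → ℂ²` be polynomial maps with `J(P) ≡ 1` and `P ∘ Q = P`.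
Then `Q` has finite order: some `t`-fold iterate of `Q` (with `t ≥ 1`) is the identity. -/
theorem finite_order_of_comp_eq_self
    (F G : Fin 2 → MvPolynomial (Fin 2) ℂ)
    (hJ : (Matrix.of fun i j : Fin 2 => MvPolynomial.pderiv j (F i)).det = 1)
    (hPQ : ∀ z : Fin 2 → ℂ,
      (fun i => eval (fun j => eval z (G j)) (F i)) = fun i => eval z (F i)) :
    ∃ t : ℕ, 1 ≤ t ∧
      (fun z : Fin 2 → ℂ => fun i => eval z (G i))^[t] = id := by
  have hGF (i : Fin 2) : aeval G (F i) = F i :=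
    MvPolynomial.funext fun z => by rw [eval_aeval]; exact congrFun (hPQ z) i
  have hF : AlgebraicIndependent ℂ F :=
    algebraicIndependent_of_det_jacobianMatrix_ne_zero <| by
      rw [jacobianMatrix, hJ]
      exact one_ne_zero
  let A := Algebra.adjoin ℂ (Set.range F)
  have : Algebra.IsAlgebraic A (MvPolynomial (Fin 2) ℂ) :=
    (isTranscendenceBasis_of_algebraicIndependent hF).isAlgebraic
  have := Algebra.FiniteType.of_restrictScalars_finiteType ℂ A (MvPolynomial (Fin 2) ℂ)
  let φ := (aeval G).extendScalarsOfLeEqualizer (S := A)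
    (Algebra.adjoin_le <| Set.range_subset_iff.mpr fun i =>
      (AlgHom.mem_equalizer _ _ _).mpr (hGF i))
  obtain ⟨t, ht, hφt⟩ := isOfFinOrder_iff_pow_eq_one.mp φ.isOfFinOrder_of_isAlgebraic
  have hiter : (aeval G)^[t] = id := by
    change (⇑φ)^[t] = id
    rw [← AlgHom.coe_pow φ t, hφt]
    rfl
  refine ⟨t, ht, funext fun z => funext fun i => ?_⟩
  have := eval_iterate_aeval G t z (X i)
  rw [hiter, id, eval_X, eval_X] at this
  exact this.symm
end
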